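/- Let Σ be an ER specification over a schema S and D an S-database. If ⟨E_1,V_1⟩ and ⟨E_2,V_2⟩ are candidate solutions for (D,Σ), then ⟨EqRel(E_1 ∪ E_2, Obj(D)), EqRel(V_1 ∪ V_2, Cells(D))⟩ is a candidate solution for (D,Σ). -/
import Mathlib


namespace LacePlus

/-! ### Constants -/

/-- Sorts of constants: objects, values, tuple identifiers. -/
inductive CKind
  | obj | val | tid
deriving DecidableEq

/-- Constants: three pairwise disjoint infinite sets (objects, values, tids),
each indexed by the natural numbers. -/
structure Const where
  kind : CKind
  id : ℕ
deriving DecidableEq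

/-- A (value) cell: a tuple id together with a position. -/
abbrev Cell := ℕ × ℕ

abbrev ERel := Set (Const × Const)
abbrev VRel := Set (Cell × Cell)

/-- A family of binary similarity predicates on constants. -/
abbrev SimFam := ℕ → Const → Const → Prop

def tidC (t : ℕ) : Const := ⟨CKind.tid, t⟩

/-! ### Schemas and databases -/

/-- A database schema: a finite set of relation symbols (coded by naturals),
each with an arity and a type vector (`isObjPos R i = true` iff position `i`
of `R` is an object position). -/
structure Schema where
  rels : Finset ℕ
  arity : ℕ → ℕ
  isObjPos : ℕ → ℕ → Bool

/-- A fact `R(t, c₁, …, c_k)`. -/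
structure Fact where
  rel : ℕ
  tid : ℕ
  args : List Const
deriving DecidableEq

/-- The constant in position `i ∈ {1,…,k}` of a fact. -/
def Fact.arg (f : Fact) (i : ℕ) : Option Const :=
  if i = 0 then none else f.args[i - 1]?

/-- A (TID-annotated) `S`-database: a finite set of facts, with relation symbols
from `S`, correct arities, and each tid occurring in at most one fact. -/
structure DB (S : Schema) where
  facts : Finset Fact
  rels_mem : ∀ f ∈ facts, f.rel ∈ S.rels
  arity_eq : ∀ f ∈ facts, f.args.length = S.arity f.rel
  tid_unique : ∀ f ∈ facts, ∀ f' ∈ facts, f.tid = f'.tid → f = f'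

/-- `Dom(D)`: the constants occurring in `D`. -/
def DomD {S : Schema} (D : DB S) : Set Const :=
  {c | ∃ f ∈ D.facts, c ∈ f.args}

/-- `Obj(D)`: the constants occurring in object positions of `D` (w.r.t. `S`). -/
def ObjD (S : Schema) (D : DB S) : Set Const :=
  {c | ∃ f ∈ D.facts, ∃ i, S.isObjPos f.rel i = true ∧ f.arg i = some c}

/-- `Cells(D)`: the value cells of `D` (w.r.t. `S`). -/
def CellsD (S : Schema) (D : DB S) : Set Cell :=
  {p | ∃ f ∈ D.facts, f.tid = p.1 ∧ 1 ≤ p.2 ∧ p.2 ≤ S.arity f.rel ∧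
        S.isObjPos f.rel p.2 = false}

/-- `t[i] = c` in `D`. -/
def DB.HasVal {S : Schema} (D : DB S) (t i : ℕ) (c : Const) : Prop :=
  ∃ f ∈ D.facts, f.tid = t ∧ f.arg i = some c

/-- `D` is well-typed over `S`: object positions hold object constants and
value positions hold value constants. -/
def WellTyped (S : Schema) (D : DB S) : Prop :=
  ∀ f ∈ D.facts, ∀ i c, f.arg i = some c →
    (S.isObjPos f.rel i = true → c.kind = CKind.obj) ∧
    (S.isObjPos f.rel i = false → c.kind = CKind.val)

/-! ### Equivalence relations -/

/-- `R` is an equivalence relation on the set `X` (as set of pairs). -/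
def IsEquivOn {α : Type} (X : Set α) (R : Set (α × α)) : Prop :=
  R ⊆ X ×ˢ X ∧ (∀ x ∈ X, (x, x) ∈ R) ∧
  (∀ x y, (x, y) ∈ R → (y, x) ∈ R) ∧
  (∀ x y z, (x, y) ∈ R → (y, z) ∈ R → (x, z) ∈ R)

/-- `EqRel(P, X)`: the smallest equivalence relation on `X` extending `P`. -/
def EqRel {α : Type} (P : Set (α × α)) (X : Set α) : Set (α × α) :=
  ⋂₀ {R | IsEquivOn X R ∧ P ⊆ R}

/-! ### Queries -/

inductive Term
  | var (v : ℕ)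
  | const (c : Const)
deriving DecidableEq

/-- Atoms: relational atoms `R(u₀,u₁,…,u_k)` (with `u₀` a tid term),
similarity atoms `u ≈ₛ u'`, and inequality atoms `u ≠ u'`. -/
inductive Atom
  | rel (R : ℕ) (ts : List Term)
  | sim (s : ℕ) (u u' : Term)
  | neq (u u' : Term)
deriving DecidableEq

def Atom.terms : Atom → List Term
  | .rel _ ts => ts
  | .sim _ u u' => [u, u']
  | .neq u u' => [u, u']

def Atom.isRel : Atom → Prop
  | .rel _ _ => True
  | _ => False

def Atom.isSim : Atom → Prop
  | .sim _ _ _ => True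
  | _ => False

def Atom.isNeq : Atom → Prop
  | .neq _ _ => True
  | _ => False

/-- The (Boolean) query contains no inequality atoms. -/
def NoNeq (q : List Atom) : Prop := ∀ a ∈ q, ¬ a.isNeq

def OccursVar (q : List Atom) (v : ℕ) : Prop := ∃ a ∈ q, Term.var v ∈ a.terms

/-! ### Induced extended databases and query satisfaction (Definition 3) -/

/-- The set of constants in position `i ≥ 1` of fact `f` in the extended
database `D_{E,W}`: the `E`-class of `f`'s `i`-th constant for object
positions, and the set of values of `W`-related cells for value positions. -/
def extArg {S : Schema} (D : DB S) (E : ERel) (W : VRel) (f : Fact) (i : ℕ) : Set Const :=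
  if S.isObjPos f.rel i = true then
    {o' | ∃ o, f.arg i = some o ∧ (o, o') ∈ E}
  else
    {c | ∃ p : Cell, ((f.tid, i), p) ∈ W ∧ D.HasVal p.1 p.2 c}

/-- Requirement 2 of Definition 3, for a single relational atom with
assignment `g` to its positions. -/
def SatRelAtom {S : Schema} (D : DB S) (E : ERel) (W : VRel)
    (g : ℕ → Set Const) (R : ℕ) (ts : List Term) : Prop :=
  ∃ f ∈ D.facts, f.rel = R ∧ ts.length = S.arity R + 1 ∧
    g 0 = {tidC f.tid} ∧
    (∀ i, 1 ≤ i → i ≤ S.arity R → g i = extArg D E W f i) ∧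
    (∀ i c, ts[i]? = some (Term.const c) → c ∈ g i)

/-- The function `h` determined by the family `g` (Requirement 1 of
Definition 3): `h(a) = {a}` for constants, and for a variable the
intersection of the `g j i` over all its occurrences in relational atoms. -/
def hTerm (q : List Atom) (g : ℕ → ℕ → Set Const) : Term → Set Const
  | .const c => {c}
  | .var v => {c | ∀ j R ts, q[j]? = some (Atom.rel R ts) →
      ∀ i, ts[i]? = some (Term.var v) → c ∈ g j i}

/-- `D_{E,W} ⊨ q` for a Boolean query `q` (Definition 3). -/
def Sat (sim : SimFam) {S : Schema} (D : DB S) (E : ERel) (W : VRel)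
    (q : List Atom) : Prop :=
  ∃ g : ℕ → ℕ → Set Const,
    (∀ v, OccursVar q v → (hTerm q g (Term.var v)).Nonempty) ∧
    (∀ j R ts, q[j]? = some (Atom.rel R ts) → SatRelAtom D E W (g j) R ts) ∧
    (∀ (j : ℕ) u u', q[j]? = some (Atom.neq u u') → hTerm q g u ∩ hTerm q g u' = ∅) ∧
    (∀ (j : ℕ) s u u', q[j]? = some (Atom.sim s u u') →
      ∃ c ∈ hTerm q g u, ∃ c' ∈ hTerm q g u', sim s c c')

/-! ### Substitution and answers -/

def Term.subst (σ : ℕ → Option Const) : Term → Term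
  | .var v =>
    match σ v with
    | some c => .const c
    | none => .var v
  | .const c => .const c

def Atom.subst (σ : ℕ → Option Const) : Atom → Atom
  | .rel R ts => .rel R (ts.map (Term.subst σ))
  | .sim s u u' => .sim s (u.subst σ) (u'.subst σ)
  | .neq u u' => .neq (u.subst σ) (u'.subst σ)

def substQ (q : List Atom) (σ : ℕ → Option Const) : List Atom :=
  q.map (Atom.subst σ)

def pairSubst (x y : ℕ) (a b : Const) : ℕ → Option Const :=
  fun v => if v = x then some a else if v = y then some b else none

/-- An `n`-ary conjunctive query: a list of atoms together with its tuple
of free (answer) variables. -/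
structure CQ where
  atoms : List Atom
  free : List ℕ

/-- `q[c⃗]`: the Boolean query obtained by substituting the tuple `cs`
for the free variables of `q`. -/
def CQ.substTuple (q : CQ) (cs : List Const) : List Atom :=
  substQ q.atoms (fun v => (q.free.findIdx? (fun w => w = v)).bind fun k => cs[k]?)

/-! ### Rules and specifications -/

/-- A rule for objects, `q(x,y) → EqO(x,y)`. -/
structure ObjRule where
  body : List Atom
  x : ℕ
  y : ℕ
deriving DecidableEq

/-- A rule for values, `q(x_t,y_t) → EqV(⟨x_t,i⟩,⟨y_t,j⟩)`. -/
structure ValRule where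
  body : List Atom
  xt : ℕ
  yt : ℕ
  i : ℕ
  j : ℕ
deriving DecidableEq

/-- `(o,o') ∈ q(D_{E,W})` for the body of an object rule. -/
def AnswerO (sim : SimFam) {S : Schema} (D : DB S) (E : ERel) (W : VRel)
    (r : ObjRule) (o o' : Const) : Prop :=
  Sat sim D E W (substQ r.body (pairSubst r.x r.y o o'))

/-- `(t,t') ∈ q(D_{E,W})` for the body of a value rule. -/
def AnswerV (sim : SimFam) {S : Schema} (D : DB S) (E : ERel) (W : VRel)
    (r : ValRule) (t t' : ℕ) : Prop :=
  Sat sim D E W (substQ r.body (pairSubst r.xt r.yt (tidC t) (tidC t')))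

/-- `D_{E,W}` satisfies the object rule `r`: `q(D_{E,W}) ⊆ E`. -/
def SatObjRule (sim : SimFam) {S : Schema} (D : DB S) (E : ERel) (W : VRel)
    (r : ObjRule) : Prop :=
  ∀ o o', AnswerO sim D E W r o o' → (o, o') ∈ E

/-- `D_{E,W}` satisfies the value rule `r`. -/
def SatValRule (sim : SimFam) {S : Schema} (D : DB S) (E : ERel) (W : VRel)
    (r : ValRule) : Prop :=
  ∀ t t', AnswerV sim D E W r t t' → ((t, r.i), (t', r.j)) ∈ W

/-- A LACE⁺ ER specification `Σ = ⟨Γ_O, Γ_V, Δ⟩` (hard/soft rules for objects,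
hard/soft rules for values, denial constraints). -/
structure ERSpec where
  hardO : List ObjRule
  softO : List ObjRule
  hardV : List ValRule
  softV : List ValRule
  dcs : List (List Atom)

/-! ### Well-formedness -/

/-- Variable `v` occurs only in object positions (w.r.t. `S`) of the
relational atoms of `q`. -/
def OnlyObjPos (S : Schema) (q : List Atom) (v : ℕ) : Prop :=
  ∀ a ∈ q,
    (∀ R ts, a = Atom.rel R ts → ∀ i, ts[i]? = some (Term.var v) →
      1 ≤ i ∧ i ≤ S.arity R ∧ S.isObjPos R i = true) ∧
    (¬ a.isRel → Term.var v ∉ a.terms)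

/-- A well-formed rule for objects: no inequality atoms, and the free
variables occur, and occur only in object positions. -/
def ObjRule.WF (S : Schema) (r : ObjRule) : Prop :=
  NoNeq r.body ∧ OccursVar r.body r.x ∧ OccursVar r.body r.y ∧
  OnlyObjPos S r.body r.x ∧ OnlyObjPos S r.body r.y

/-- `v` occurs exactly once in `q`, namely at position 0 of the relational
atom number `jx`, whose relation symbol is `Rx`. -/
def UniqueTidOcc (q : List Atom) (v : ℕ) (jx Rx : ℕ) : Prop :=
  (∃ ts, q[jx]? = some (Atom.rel Rx ts) ∧ ts[0]? = some (Term.var v)) ∧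
  (∀ j R ts, q[j]? = some (Atom.rel R ts) → ∀ p, ts[p]? = some (Term.var v) →
    j = jx ∧ p = 0) ∧
  (∀ a ∈ q, ¬ a.isRel → Term.var v ∉ a.terms)

/-- A well-formed rule for values: no inequality atoms, `x_t` and `y_t` each
occur exactly once, at position 0 of relational atoms with relations `R_x`,
`R_y`, and `i`, `j` are value positions of `R_x`, `R_y`. -/
def ValRule.WF (S : Schema) (r : ValRule) : Prop :=
  NoNeq r.body ∧
  ∃ jx Rx jy Ry, UniqueTidOcc r.body r.xt jx Rx ∧ UniqueTidOcc r.body r.yt jy Ry ∧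
    1 ≤ r.i ∧ r.i ≤ S.arity Rx ∧ S.isObjPos Rx r.i = false ∧
    1 ≤ r.j ∧ r.j ≤ S.arity Ry ∧ S.isObjPos Ry r.j = false

/-- A well-formed denial constraint: a Boolean CQ with inequality atoms
(no similarity atoms), safe: each variable of an inequality atom occurs in
some relational atom. -/
def DCWF (δ : List Atom) : Prop :=
  (∀ a ∈ δ, ¬ a.isSim) ∧
  (∀ a ∈ δ, ∀ u u', a = Atom.neq u u' →
    ∃ v v', u = Term.var v ∧ u' = Term.var v' ∧
      (∃ b ∈ δ, ∃ R ts, b = Atom.rel R ts ∧ Term.var v ∈ ts) ∧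
      (∃ b ∈ δ, ∃ R ts, b = Atom.rel R ts ∧ Term.var v' ∈ ts))

/-- Well-formed ER specification over `S`. -/
def ERSpec.WF (S : Schema) (Sp : ERSpec) : Prop :=
  (∀ r ∈ Sp.hardO, r.WF S) ∧ (∀ r ∈ Sp.softO, r.WF S) ∧
  (∀ r ∈ Sp.hardV, r.WF S) ∧ (∀ r ∈ Sp.softV, r.WF S) ∧
  (∀ δ ∈ Sp.dcs, DCWF δ)

/-! ### Candidate solutions and solutions (Definition 4) -/

inductive CandSol (sim : SimFam) {S : Schema} (D : DB S) (Sp : ERSpec) :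
    ERel → VRel → Prop
  | base : CandSol sim D Sp (EqRel ∅ (ObjD S D)) (EqRel ∅ (CellsD S D))
  | stepO {E : ERel} {W : VRel} {o o' : Const} (r : ObjRule) :
      r ∈ Sp.hardO ∨ r ∈ Sp.softO → CandSol sim D Sp E W →
      AnswerO sim D E W r o o' →
      CandSol sim D Sp (EqRel (E ∪ {(o, o')}) (ObjD S D)) W
  | stepV {E : ERel} {W : VRel} {t t' : ℕ} (r : ValRule) :
      r ∈ Sp.hardV ∨ r ∈ Sp.softV → CandSol sim D Sp E W →
      AnswerV sim D E W r t t' →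
      CandSol sim D Sp E (EqRel (W ∪ {((t, r.i), (t', r.j))}) (CellsD S D))

/-- `D_{E,W}` satisfies all hard rules of `Sp`. -/
def SatHard (sim : SimFam) {S : Schema} (D : DB S) (Sp : ERSpec)
    (E : ERel) (W : VRel) : Prop :=
  (∀ r ∈ Sp.hardO, SatObjRule sim D E W r) ∧
  (∀ r ∈ Sp.hardV, SatValRule sim D E W r)

/-- `⟨E,W⟩ ∈ Sol(D,Σ)`: a candidate solution whose induced database satisfies
all hard rules and all denial constraints. -/
def Solution (sim : SimFam) {S : Schema} (D : DB S) (Sp : ERSpec)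
    (E : ERel) (W : VRel) : Prop :=
  CandSol sim D Sp E W ∧ SatHard sim D Sp E W ∧
  (∀ δ ∈ Sp.dcs, ¬ Sat sim D E W δ)

/-- `⟨E,W⟩ ∈ MaxSol(D,Σ)`: a solution such that no solution `⟨E',W'⟩`
satisfies `E ∪ V ⊊ E' ∪ V'`. -/
def MaxSolution (sim : SimFam) {S : Schema} (D : DB S) (Sp : ERSpec)
    (E : ERel) (W : VRel) : Prop :=
  Solution sim D Sp E W ∧
  ¬ ∃ E' W', Solution sim D Sp E' W' ∧ E ⊆ E' ∧ W ⊆ W' ∧ ¬ (E' ⊆ E ∧ W' ⊆ W)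

/-! ### Hard closure -/

/-- `⟨Eh,Wh⟩` is the hard closure of the candidate solution `⟨E0,W0⟩`:
the least candidate solution extending `⟨E0,W0⟩` that satisfies all hard
rules. -/
def IsHardClosure (sim : SimFam) {S : Schema} (D : DB S) (Sp : ERSpec)
    (E0 : ERel) (W0 : VRel) (Eh : ERel) (Wh : VRel) : Prop :=
  CandSol sim D Sp Eh Wh ∧ E0 ⊆ Eh ∧ W0 ⊆ Wh ∧ SatHard sim D Sp Eh Wh ∧
  ∀ E W, CandSol sim D Sp E W → E0 ⊆ E → W0 ⊆ W → SatHard sim D Sp E W →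
    Eh ⊆ E ∧ Wh ⊆ W

/-! ### The simulation construction -/

/-- The schema `S_V`: `S` with all object positions changed to value
positions. -/
def Schema.toValSchema (S : Schema) : Schema :=
  { rels := S.rels, arity := S.arity, isObjPos := fun _ _ => false }

/-- `D^V`: the database `D` viewed as an `S_V`-database (all object constants
treated as value constants). -/
def DB.toVal {S : Schema} (D : DB S) : DB S.toValSchema :=
  { facts := D.facts
    rels_mem := D.rels_mem
    arity_eq := D.arity_eq
    tid_unique := D.tid_unique }

/-- `V_E`: the pairs of cells `(⟨t,i⟩,⟨t',j⟩)` with `(t[i],t'[j]) ∈ E`. -/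
def VE {S : Schema} (D : DB S) (E : ERel) : VRel :=
  {p | ∃ c c', D.HasVal p.1.1 p.1.2 c ∧ D.HasVal p.2.1 p.2.2 c' ∧ (c, c') ∈ E}

/-- `r'` is a translation of the object rule `r` into a rule for values:
same body, and the head cells `⟨x_t,i⟩`, `⟨y_t,j⟩` are positions of atoms of
the body containing `x` and `y`, with `x_t`, `y_t` the corresponding tid
variables. -/
def IsObjToValRule (r : ObjRule) (r' : ValRule) : Prop :=
  r'.body = r.body ∧
  (∃ jx : ℕ, ∃ Rx ts, r.body[jx]? = some (Atom.rel Rx ts) ∧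
    ts[0]? = some (Term.var r'.xt) ∧ ts[r'.i]? = some (Term.var r.x) ∧ 1 ≤ r'.i) ∧
  (∃ jy : ℕ, ∃ Ry ts, r.body[jy]? = some (Atom.rel Ry ts) ∧
    ts[0]? = some (Term.var r'.yt) ∧ ts[r'.j]? = some (Term.var r.y) ∧ 1 ≤ r'.j)

/-- The hard rule of `Γ_global` for relations `P`, `P'` and (object)
positions `i` of `P` and `j` of `P'`:
`P(x_t,u₁,…,z,…,u_k) ∧ P'(y_t,v₁,…,z,…,v_ℓ) ⇒ EqV(⟨x_t,i⟩,⟨y_t,j⟩)`,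
with `x_t, y_t, z` and all the `u`'s and `v`'s pairwise distinct variables. -/
def globalRule (S : Schema) (P P' i j : ℕ) : ValRule :=
  { body := [Atom.rel P (Term.var 0 ::
        (List.range (S.arity P)).map fun p =>
          if p + 1 = i then Term.var 2 else Term.var (3 + p)),
      Atom.rel P' (Term.var 1 ::
        (List.range (S.arity P')).map fun p =>
          if p + 1 = j then Term.var 2 else Term.var (3 + S.arity P + p))]
    xt := 0, yt := 1, i := i, j := j }

/-- `Sp'` is (a) `Σ' = ⟨∅, Γ_V ∪ Γ_{O⇝V} ∪ Γ_global, Δ⟩` obtained from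
`Sp = ⟨Γ_O, Γ_V, Δ⟩` by the simulation construction. -/
structure IsSimSpec (S : Schema) (Sp Sp' : ERSpec) : Prop where
  hardO_nil : Sp'.hardO = []
  softO_nil : Sp'.softO = []
  dcs_eq : Sp'.dcs = Sp.dcs
  hardV_sub : ∀ r ∈ Sp.hardV, r ∈ Sp'.hardV
  softV_sub : ∀ r ∈ Sp.softV, r ∈ Sp'.softV
  hardO_trans : ∀ r ∈ Sp.hardO, ∃ r' ∈ Sp'.hardV, IsObjToValRule r r'
  softO_trans : ∀ r ∈ Sp.softO, ∃ r' ∈ Sp'.softV, IsObjToValRule r r'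
  global_mem : ∀ P ∈ S.rels, ∀ P' ∈ S.rels, ∀ i j,
    1 ≤ i → i ≤ S.arity P → S.isObjPos P i = true →
    1 ≤ j → j ≤ S.arity P' → S.isObjPos P' j = true →
    globalRule S P P' i j ∈ Sp'.hardV
  hardV_only : ∀ r' ∈ Sp'.hardV, r' ∈ Sp.hardV ∨
    (∃ r ∈ Sp.hardO, IsObjToValRule r r') ∨
    (∃ P P' i j, P ∈ S.rels ∧ P' ∈ S.rels ∧
      1 ≤ i ∧ i ≤ S.arity P ∧ S.isObjPos P i = true ∧
      1 ≤ j ∧ j ≤ S.arity P' ∧ S.isObjPos P' j = true ∧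
      r' = globalRule S P P' i j)
  softV_only : ∀ r' ∈ Sp'.softV, r' ∈ Sp.softV ∨
    ∃ r ∈ Sp.softO, IsObjToValRule r r'

/-- A cell of `D^V` holding an object constant of the original database. -/
def IsObjCell {S : Schema} (D : DB S) (p : Cell) : Prop :=
  ∃ c, D.HasVal p.1 p.2 c ∧ c.kind = CKind.obj

/-- A cell of `D^V` holding a value constant of the original database. -/
def IsValCell {S : Schema} (D : DB S) (p : Cell) : Prop :=
  ∃ c, D.HasVal p.1 p.2 c ∧ c.kind = CKind.val

/-! ### Auxiliary lemmas for `candSol_union` -/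

theorem subset_eqRel {α : Type} (P : Set (α × α)) (X : Set α) : P ⊆ EqRel P X := by
  intro p hp
  rw [EqRel, Set.mem_sInter]
  intro R hR
  exact hR.2 hp

theorem eqRel_union_eqRel {α : Type} (A B : Set (α × α)) (X : Set α) :
    EqRel (A ∪ EqRel B X) X = EqRel (A ∪ B) X := by
  have hcoll : {R : Set (α × α) | IsEquivOn X R ∧ A ∪ EqRel B X ⊆ R} =
      {R : Set (α × α) | IsEquivOn X R ∧ A ∪ B ⊆ R} := by
    ext R
    simp only [Set.mem_setOf_eq, Set.union_subset_iff]
    constructor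
    · rintro ⟨hR, hA, hB⟩
      exact ⟨hR, hA, (subset_eqRel B X).trans hB⟩
    · rintro ⟨hR, hA, hB⟩
      refine ⟨hR, hA, ?_⟩
      intro p hp
      exact Set.mem_sInter.mp hp R ⟨hR, hB⟩
  exact congrArg Set.sInter hcoll

theorem eqRel_eqRel_union {α : Type} (B A : Set (α × α)) (X : Set α) :
    EqRel (EqRel B X ∪ A) X = EqRel (B ∪ A) X := by
  rw [Set.union_comm, eqRel_union_eqRel, Set.union_comm]

theorem eqRel_idem {α : Type} (P : Set (α × α)) (X : Set α) :
    EqRel (EqRel P X) X = EqRel P X := by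
  have h := eqRel_union_eqRel ∅ P X
  simpa using h

theorem candSol_eqRel_fix (sim : SimFam) {S : Schema} (D : DB S) (Sp : ERSpec)
    {E : ERel} {W : VRel} (h : CandSol sim D Sp E W) :
    EqRel E (ObjD S D) = E ∧ EqRel W (CellsD S D) = W := by
  induction h with
  | base => exact ⟨eqRel_idem _ _, eqRel_idem _ _⟩
  | stepO r hm hc ha ih => exact ⟨eqRel_idem _ _, ih.2⟩
  | stepV r hm hc ha ih => exact ⟨ih.1, eqRel_idem _ _⟩

theorem extArg_mono {S : Schema} (D : DB S) {E E' : ERel} {W W' : VRel}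
    (hE : E ⊆ E') (hW : W ⊆ W') (f : Fact) (i : ℕ) :
    extArg D E W f i ⊆ extArg D E' W' f i := by
  unfold extArg
  by_cases h : S.isObjPos f.rel i = true
  · simp only [h, if_true]
    rintro c ⟨o, ho, hoE⟩
    exact ⟨o, ho, hE hoE⟩
  · simp only [h, if_false]
    rintro c ⟨p, hp, hv⟩
    exact ⟨p, hW hp, hv⟩

theorem noNeq_subst {q : List Atom} (h : NoNeq q) (σ : ℕ → Option Const) :
    NoNeq (substQ q σ) := by
  intro a ha
  simp only [substQ, List.mem_map] at ha
  obtain ⟨b, hb, rfl⟩ := ha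
  have hb' := h b hb
  cases b with
  | rel R ts => simp [Atom.subst, Atom.isNeq]
  | sim s u u' => simp [Atom.subst, Atom.isNeq]
  | neq u u' => exact absurd trivial hb'

theorem sat_mono (sim : SimFam) {S : Schema} (D : DB S) {E E' : ERel} {W W' : VRel}
    (hE : E ⊆ E') (hW : W ⊆ W') {q : List Atom} (hq : NoNeq q)
    (h : Sat sim D E W q) : Sat sim D E' W' q := by
  obtain ⟨g, hne, hrel, _hneq, hsim⟩ := h
  set g' : ℕ → ℕ → Set Const := fun j i =>
    g j i ∪ {c | i ≠ 0 ∧ ∃ f ∈ D.facts, g j 0 = {tidC f.tid} ∧ c ∈ extArg D E' W' f i}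
    with hg'def
  have hg : ∀ j i, g j i ⊆ g' j i := fun j i => Set.subset_union_left
  have hterm : ∀ u, hTerm q g u ⊆ hTerm q g' u := by
    intro u
    cases u with
    | const c => exact subset_rfl
    | var v =>
      intro c hc j R ts hj i hi
      exact hg j i (hc j R ts hj i hi)
  refine ⟨g', ?_, ?_, ?_, ?_⟩
  · intro v hv
    obtain ⟨c, hc⟩ := hne v hv
    exact ⟨c, hterm _ hc⟩
  · intro j R ts hj
    obtain ⟨f, hf, hfR, hlen, hg0, hgi, hconst⟩ := hrel j R ts hj
    refine ⟨f, hf, hfR, hlen, ?_, ?_, ?_⟩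
    · ext c
      simp only [hg'def, Set.mem_union, Set.mem_setOf_eq, hg0]
      constructor
      · rintro (hc | ⟨h0, _⟩)
        · exact hc
        · exact absurd rfl h0
      · intro hc; left; exact hc
    · intro i h1i hia
      ext c
      simp only [hg'def, Set.mem_union, Set.mem_setOf_eq]
      constructor
      · rintro (hc | ⟨_, f', hf', heq, hc⟩)
        · rw [hgi i h1i hia] at hc
          exact extArg_mono D hE hW f i hc
        · have htid : f'.tid = f.tid := by
            rw [hg0] at heq
            have : tidC f'.tid ∈ ({tidC f.tid} : Set Const) := by
              rw [heq]; rfl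
            simpa [tidC, Const.mk.injEq] using this
          have : f' = f := D.tid_unique f' hf' f hf htid
          rw [this] at hc
          exact hc
      · intro hc
        right
        exact ⟨by omega, f, hf, hg0, hc⟩
    · intro i c hc
      exact hg j i (hconst i c hc)
  · intro j u u' hj
    have hmem : Atom.neq u u' ∈ q := by
      have := List.getElem?_eq_some_iff.mp hj
      obtain ⟨hlt, hget⟩ := this
      exact hget ▸ List.getElem_mem hlt
    exact absurd trivial (hq _ hmem)
  · intro j s u u' hj
    obtain ⟨c, hc, c', hc', hsc⟩ := hsim j s u u' hj
    exact ⟨c, hterm u hc, c', hterm u' hc', hsc⟩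

theorem answerO_mono (sim : SimFam) {S : Schema} (D : DB S) {E E' : ERel} {W W' : VRel}
    (hE : E ⊆ E') (hW : W ⊆ W') {r : ObjRule} (hr : NoNeq r.body) {o o' : Const}
    (h : AnswerO sim D E W r o o') : AnswerO sim D E' W' r o o' :=
  sat_mono sim D hE hW (noNeq_subst hr _) h

theorem answerV_mono (sim : SimFam) {S : Schema} (D : DB S) {E E' : ERel} {W W' : VRel}
    (hE : E ⊆ E') (hW : W ⊆ W') {r : ValRule} (hr : NoNeq r.body) {t t' : ℕ}
    (h : AnswerV sim D E W r t t') : AnswerV sim D E' W' r t t' :=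
  sat_mono sim D hE hW (noNeq_subst hr _) h

end LacePlus

/-- If `⟨E₁,V₁⟩` and `⟨E₂,V₂⟩` are candidate solutions for `(D,Σ)`, then
`⟨EqRel(E₁ ∪ E₂, Obj(D)), EqRel(V₁ ∪ V₂, Cells(D))⟩` is a candidate solution
for `(D,Σ)`. -/
theorem LacePlus.candSol_union (sim : SimFam) {S : Schema} (D : DB S)
    (hD : WellTyped S D) (Sp : ERSpec) (hWF : Sp.WF S)
    {E1 E2 : ERel} {W1 W2 : VRel}
    (h1 : CandSol sim D Sp E1 W1) (h2 : CandSol sim D Sp E2 W2) :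
    CandSol sim D Sp (EqRel (E1 ∪ E2) (ObjD S D)) (EqRel (W1 ∪ W2) (CellsD S D)) := by
  induction h2 with
  | base =>
    rw [eqRel_union_eqRel, eqRel_union_eqRel]
    simp only [Set.union_empty]
    obtain ⟨hEfix, hWfix⟩ := candSol_eqRel_fix sim D Sp h1
    rw [hEfix, hWfix]
    exact h1
  | stepO r hm hc ha ih =>
    rename_i E' W' o o'
    have hnn : NoNeq r.body := by
      rcases hm with hm | hm
      · exact (hWF.1 r hm).1
      · exact (hWF.2.1 r hm).1
    have hE : E' ⊆ EqRel (E1 ∪ E') (ObjD S D) :=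
      Set.subset_union_right.trans (subset_eqRel _ _)
    have hW : W' ⊆ EqRel (W1 ∪ W') (CellsD S D) :=
      Set.subset_union_right.trans (subset_eqRel _ _)
    have ha' := answerO_mono sim D hE hW hnn ha
    have hstep := CandSol.stepO r hm ih ha'
    rw [eqRel_union_eqRel E1 (E' ∪ {(o, o')}), ← Set.union_assoc,
      ← eqRel_eqRel_union (E1 ∪ E') {(o, o')}]
    exact hstep
  | stepV r hm hc ha ih =>
    rename_i E' W' t t'
    have hnn : NoNeq r.body := by
      rcases hm with hm | hm
      · exact (hWF.2.2.1 r hm).1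
      · exact (hWF.2.2.2.1 r hm).1
    have hE : E' ⊆ EqRel (E1 ∪ E') (ObjD S D) :=
      Set.subset_union_right.trans (subset_eqRel _ _)
    have hW : W' ⊆ EqRel (W1 ∪ W') (CellsD S D) :=
      Set.subset_union_right.trans (subset_eqRel _ _)
    have ha' := answerV_mono sim D hE hW hnn ha
    have hstep := CandSol.stepV r hm ih ha'
    rw [eqRel_union_eqRel W1 (W' ∪ {((t, r.i), (t', r.j))}), ← Set.union_assoc,
      ← eqRel_eqRel_union (W1 ∪ W') {((t, r.i), (t', r.j))}]
    exact hstep
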